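/- Let S be a finite set with a distinguished state s₀, A a finite set, P : S × A × S → [0,1] a stochastic kernel (so ∑_{s'} P(s,a,s') = 1 for all s,a), and φ : S → A a policy. Suppose there exists a function ξ : S → ℝ with ξ(s) ≥ 1 for all s such that ∑_{s' ∈ S \ {s₀}} P(s, a, s') ξ(s') ≤ ξ(s) − 1 for every (s,a) ∈ S × A. Then the linear operator T₀ on functions Q : S × A → ℝ defined by (T₀ Q)(s,a) = ∑_{s' ∈ S \ {s₀}} P(s,a,s') Q(s', φ(s')) is a contraction with modulus β = max_{s} (ξ(s) − 1)/ξ(s) < 1 with respect to the weighted sup-norm ‖Q‖_ξ = max_{(s,a)} |Q(s,a)| / ξ(s). -/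
import Mathlib


/-- The linear part of the Bellman-type operator with transitions into the
ergodic state `s₀` deleted is a contraction in the weighted sup-norm `‖·‖_ξ`,
with modulus `β = max_s (ξ s - 1)/ξ s < 1`. -/
theorem weighted_supnorm_contraction
    {S A : Type*} [Fintype S] [Fintype A] [Nonempty S] [Nonempty A] [DecidableEq S]
    (s₀ : S) (P : S → A → S → ℝ) (φ : S → A) (ξ : S → ℝ)
    (hPnn : ∀ s a s', 0 ≤ P s a s')
    (hPsum : ∀ s a, ∑ s', P s a s' = 1)
    (hξ : ∀ s, 1 ≤ ξ s)
    (hdrift : ∀ s a, ∑ s' ∈ Finset.univ.erase s₀, P s a s' * ξ s' ≤ ξ s - 1) :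
    (Finset.univ.sup' Finset.univ_nonempty (fun s : S => (ξ s - 1) / ξ s) < 1) ∧
    ∀ Q Q' : S → A → ℝ,
      Finset.univ.sup' Finset.univ_nonempty
          (fun p : S × A =>
            |(∑ s' ∈ Finset.univ.erase s₀, P p.1 p.2 s' * Q s' (φ s')) -
              (∑ s' ∈ Finset.univ.erase s₀, P p.1 p.2 s' * Q' s' (φ s'))| / ξ p.1)
        ≤ (Finset.univ.sup' Finset.univ_nonempty (fun s : S => (ξ s - 1) / ξ s)) *
          Finset.univ.sup' Finset.univ_nonempty
            (fun p : S × A => |Q p.1 p.2 - Q' p.1 p.2| / ξ p.1) := by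
  have hξpos : ∀ s, (0:ℝ) < ξ s := fun s => lt_of_lt_of_le one_pos (hξ s)
  set β := Finset.univ.sup' Finset.univ_nonempty (fun s : S => (ξ s - 1) / ξ s) with hβ
  have hβlt : β < 1 := by
    rw [Finset.sup'_lt_iff]
    intro s _
    rw [div_lt_one (hξpos s)]
    linarith
  refine ⟨hβlt, fun Q Q' => ?_⟩
  set N := Finset.univ.sup' Finset.univ_nonempty
      (fun p : S × A => |Q p.1 p.2 - Q' p.1 p.2| / ξ p.1) with hN
  have hNnn : 0 ≤ N := by
    obtain ⟨p⟩ : Nonempty (S × A) := inferInstance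
    exact le_trans (div_nonneg (abs_nonneg (Q p.1 p.2 - Q' p.1 p.2)) (hξpos p.1).le)
      (Finset.le_sup' (fun p : S × A => |Q p.1 p.2 - Q' p.1 p.2| / ξ p.1) (Finset.mem_univ p))
  apply Finset.sup'_le
  rintro ⟨s, a⟩ _
  simp only
  rw [div_le_iff₀ (hξpos s)]
  have key : |(∑ s' ∈ Finset.univ.erase s₀, P s a s' * Q s' (φ s')) -
      (∑ s' ∈ Finset.univ.erase s₀, P s a s' * Q' s' (φ s'))| ≤ (ξ s - 1) * N := by
    rw [← Finset.sum_sub_distrib]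
    calc |∑ s' ∈ Finset.univ.erase s₀, (P s a s' * Q s' (φ s') - P s a s' * Q' s' (φ s'))|
        ≤ ∑ s' ∈ Finset.univ.erase s₀, |P s a s' * Q s' (φ s') - P s a s' * Q' s' (φ s')| :=
          Finset.abs_sum_le_sum_abs _ _
      _ ≤ ∑ s' ∈ Finset.univ.erase s₀, P s a s' * ξ s' * N := by
          apply Finset.sum_le_sum
          intro s' _
          rw [← mul_sub, abs_mul, abs_of_nonneg (hPnn s a s')]
          have h1 : |Q s' (φ s') - Q' s' (φ s')| ≤ ξ s' * N := by
            have := Finset.le_sup' (fun p : S × A => |Q p.1 p.2 - Q' p.1 p.2| / ξ p.1)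
              (Finset.mem_univ (s', φ s'))
            rw [← hN] at this
            calc |Q s' (φ s') - Q' s' (φ s')|
                = (|Q s' (φ s') - Q' s' (φ s')| / ξ s') * ξ s' := by
                  rw [div_mul_cancel₀ _ (hξpos s').ne']
              _ ≤ N * ξ s' := mul_le_mul_of_nonneg_right this (hξpos s').le
              _ = ξ s' * N := mul_comm _ _
          calc P s a s' * |Q s' (φ s') - Q' s' (φ s')| ≤ P s a s' * (ξ s' * N) :=
                mul_le_mul_of_nonneg_left h1 (hPnn s a s')
            _ = P s a s' * ξ s' * N := (mul_assoc _ _ _).symm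
      _ = (∑ s' ∈ Finset.univ.erase s₀, P s a s' * ξ s') * N := by
          rw [Finset.sum_mul]
      _ ≤ (ξ s - 1) * N := mul_le_mul_of_nonneg_right (hdrift s a) hNnn
  refine key.trans ?_
  have hβs : (ξ s - 1) / ξ s ≤ β := Finset.le_sup' (fun s : S => (ξ s - 1) / ξ s) (Finset.mem_univ s)
  calc (ξ s - 1) * N = ((ξ s - 1) / ξ s) * N * ξ s := by
        rw [div_mul_eq_mul_div, div_mul_eq_mul_div,
          mul_div_cancel_right₀ _ (hξpos s).ne']
    _ ≤ β * N * ξ s := by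
        apply mul_le_mul_of_nonneg_right _ (hξpos s).le
        exact mul_le_mul_of_nonneg_right hβs hNnn
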